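/- Let u be a unit timelike vector field with ∇_j u_k = φ(u_j u_k + g_{jk}) + σ_{jk} (σ symmetric, trace-free, σ u = 0, u vorticity- and acceleration-free), and suppose Ric(u) = ξ u. Using the identity R_{jk}u^j = ∇²u_k − ∇_k ∇^j u_j and assuming ∇^l σ_{kl} = u_k σ_{rs}σ^{rs}, one obtains ξ = (n−1)(φ² + φ̇) + σ_{kl}σ^{kl} and ∇_k φ = −φ̇ u_k (where φ̇ = u^k∇_k φ). -/

import Mathlib

/-!
Differentiating the kinematic decomposition with the Leibniz rule and contracting, the two
sides of the Ricci identity become `∇^l∇_l u_k = (φ̇ + (n-1)φ² + σ_{rs}σ^{rs}) u_k + ∇_k φ`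
(using `u^l ∇_l u_k = 0`, `∇^l u_l = (n-1)φ` and the divergence hypothesis on `σ`) and
`∇_k ∇^l u_l = (n-1) ∇_k φ` (because `∇^l u_l = (n-1)φ` identically and an additive `∇_k` is
`ℤ`-linear). Hence `(n-2) ∇_k φ` is a multiple `C u_k` of `u_k`; contracting
with `u^k` and using `u^k u_k = -1` gives `C = -(n-2) φ̇`, which is both claims since `n ≠ 2`.
-/

open Finset

section Contraction

variable {ι : Type*} [Fintype ι] {G Ginv : ι → ι → ℝ}

theorem sum_sum_inv_mul_mul_eq [DecidableEq ι]
    (hinv : ∀ j k, ∑ m, Ginv j m * G m k = if j = k then 1 else 0) (v : ι → ℝ) (k : ι) :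
    ∑ l, ∑ m, Ginv l m * G m k * v l = v k := by
  simp_rw [← sum_mul, hinv, ite_mul, one_mul, zero_mul, sum_ite_eq', mem_univ, if_true]

theorem sum_sum_inv_mul_mul_eq_of_symm [DecidableEq ι]
    (hinv : ∀ j k, ∑ m, Ginv j m * G m k = if j = k then 1 else 0)
    (hsymm : ∀ j k, Ginv j k = Ginv k j) (v : ι → ℝ) (k : ι) :
    ∑ l, ∑ m, Ginv l m * v m * G l k = v k := by
  calc ∑ l, ∑ m, Ginv l m * v m * G l k = ∑ m, v m * ∑ l, Ginv m l * G l k := by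
        rw [sum_comm]
        simp_rw [mul_sum, hsymm _ _]
        exact sum_congr rfl fun m _ => sum_congr rfl fun l _ => by ring
    _ = v k := by simp [hinv]

theorem sum_sum_inv_mul_eq_card [DecidableEq ι]
    (hinv : ∀ j k, ∑ m, Ginv j m * G m k = if j = k then 1 else 0)
    (hsymm : ∀ j k, Ginv j k = Ginv k j) : ∑ j, ∑ i, Ginv j i * G j i = Fintype.card ι := by
  rw [sum_comm]
  simp_rw [hsymm _ _, hinv, if_pos trivial, sum_const, card_univ, nsmul_eq_mul, mul_one]

theorem sum_sum_inv_mul_eq_neg_of_eq_mul {u w : ι → ℝ} {c : ℝ}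
    (hunit : ∑ j, ∑ k, Ginv j k * u j * u k = -1) (hw : ∀ k, w k = c * u k) :
    ∑ j, ∑ i, Ginv j i * u i * w j = -c := by
  calc ∑ j, ∑ i, Ginv j i * u i * w j = c * ∑ j, ∑ k, Ginv j k * u j * u k := by
        simp_rw [hw, mul_sum]
        exact sum_congr rfl fun j _ => sum_congr rfl fun i _ => by ring
    _ = -c := by rw [hunit, mul_neg_one]

theorem eq_neg_sum_sum_inv_mul_of_mul_eq_mul {u w : ι → ℝ} {a c : ℝ}
    (hunit : ∑ j, ∑ k, Ginv j k * u j * u k = -1) (ha : a ≠ 0) (h : ∀ k, a * w k = c * u k) :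
    c = -a * ∑ j, ∑ i, Ginv j i * u i * w j ∧
      ∀ k, w k = -(∑ j, ∑ i, Ginv j i * u i * w j) * u k := by
  have hw : ∀ k, w k = c / a * u k := fun k => by
    rw [div_mul_eq_mul_div, eq_div_iff ha, mul_comm]
    exact h k
  rw [sum_sum_inv_mul_eq_neg_of_eq_mul hunit hw, neg_neg]
  exact ⟨by field_simp, hw⟩

variable [DecidableEq ι] {A σ : ι → ι → ℝ} {u : ι → ℝ} {φ : ℝ}
  (hinv : ∀ j k, ∑ m, Ginv j m * G m k = if j = k then 1 else 0)
  (hsymm : ∀ j k, Ginv j k = Ginv k j)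
  (hunit : ∑ j, ∑ k, Ginv j k * u j * u k = -1)
  (hA : ∀ j k, A j k = φ * (u j * u k + G j k) + σ j k)
include hinv hsymm hunit hA

theorem trace_kinematic (htf : ∑ j, ∑ k, Ginv j k * σ j k = 0) :
    ∑ j, ∑ i, Ginv j i * A j i = (Fintype.card ι - 1) * φ := by
  calc ∑ j, ∑ i, Ginv j i * A j i
      = ∑ j, ∑ i, (φ * (Ginv j i * u j * u i) + φ * (Ginv j i * G j i) + Ginv j i * σ j i) :=
        sum_congr rfl fun j _ => sum_congr rfl fun i _ => by rw [hA]; ring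
    _ = (Fintype.card ι - 1) * φ := by
        simp only [sum_add_distrib, ← mul_sum]
        rw [hunit, sum_sum_inv_mul_eq_card hinv hsymm, htf]
        ring

theorem contract_kinematic_eq_zero (hσsymm : ∀ j k, σ j k = σ k j)
    (hσu : ∀ j, ∑ k, ∑ l, Ginv k l * u l * σ j k = 0) (k : ι) :
    ∑ l, ∑ m, Ginv l m * u m * A l k = 0 := by
  calc ∑ l, ∑ m, Ginv l m * u m * A l k
      = ∑ l, ∑ m, (φ * u k * (Ginv l m * u l * u m) + φ * (Ginv l m * u m * G l k)
          + Ginv l m * u m * σ k l) :=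
        sum_congr rfl fun l _ => sum_congr rfl fun m _ => by rw [hA, hσsymm l k]; ring
    _ = 0 := by
        simp only [sum_add_distrib, ← mul_sum]
        rw [hunit, sum_sum_inv_mul_mul_eq_of_symm hinv hsymm, hσu]
        ring

end Contraction

section Derivation

variable {M ι : Type*} (D : (M → ℝ) → ι → M → ℝ)
  (hadd : ∀ (f h : M → ℝ) i, D (f + h) i = D f i + D h i)
include hadd

theorem deriv_intCast_mul (z : ℤ) (f : M → ℝ) (i : ι) (x : M) :
    D (fun y => (z : ℝ) * f y) i x = z * D f i x := by
  have h := congrFun (map_zsmul (AddMonoidHom.mk' (D · i) (hadd · · i)) z f) x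
  simpa only [AddMonoidHom.mk'_apply, Pi.smul_def, Pi.smul_apply, zsmul_eq_mul] using h

variable (hleib : ∀ (f h : M → ℝ) i x,
      D (fun y => f y * h y) i x = f x * D h i x + h x * D f i x)
  {g σ Du : M → ι → ι → ℝ} {u : M → ι → ℝ} {φ : M → ℝ}
  (hDg : ∀ k l i, D (fun y => g y k l) i = 0)
  (hDu : ∀ j k x, D (fun y => u y k) j x = Du x j k)
  (hdecomp : ∀ x j k, Du x j k = φ x * (u x j * u x k + g x j k) + σ x j k)
include hleib hDg hDu hdecomp

theorem deriv_kinematic (l m k : ι) (x : M) :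
    D (fun y => Du y m k) l x =
      φ x * (u x m * Du x l k + u x k * Du x l m) + (u x m * u x k + g x m k) * D φ l x
        + D (fun y => σ y m k) l x := by
  have hDu_eq : (fun y => Du y m k) =
      (fun y => φ y * (u y m * u y k + g y m k)) + fun y => σ y m k :=
    funext fun y => hdecomp y m k
  have hsum : (fun y => u y m * u y k + g y m k) =
      (fun y => u y m * u y k) + fun y => g y m k := rfl
  rw [hDu_eq, hadd, Pi.add_apply, hleib, hsum, hadd, Pi.add_apply, hleib, hDu, hDu, hDg]
  simp only [Pi.zero_apply]
  ring

theorem sum_inv_mul_deriv_kinematic [Fintype ι] [DecidableEq ι] {ginv : M → ι → ι → ℝ}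
    (hginv : ∀ x j k, ∑ m, ginv x j m * g x m k = if j = k then 1 else 0) (x : M) (k : ι) :
    ∑ l, ∑ m, ginv x l m * D (fun y => Du y m k) l x =
      φ x * ∑ l, ∑ m, ginv x l m * u x m * Du x l k
        + φ x * u x k * ∑ l, ∑ m, ginv x l m * Du x l m
        + u x k * ∑ l, ∑ m, ginv x l m * u x m * D φ l x
        + D φ k x
        + ∑ l, ∑ m, ginv x l m * D (fun y => σ y m k) l x := by
  calc ∑ l, ∑ m, ginv x l m * D (fun y => Du y m k) l x
      = ∑ l, ∑ m, (φ x * (ginv x l m * u x m * Du x l k)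
          + φ x * u x k * (ginv x l m * Du x l m)
          + u x k * (ginv x l m * u x m * D φ l x)
          + ginv x l m * g x m k * D φ l x
          + ginv x l m * D (fun y => σ y m k) l x) :=
        sum_congr rfl fun l _ => sum_congr rfl fun m _ => by
          rw [deriv_kinematic D hadd hleib hDg hDu hdecomp]; ring
    _ = _ := by
        simp only [sum_add_distrib, ← mul_sum]
        rw [sum_sum_inv_mul_mul_eq (hginv x)]

end Derivation

open Finset in
theorem xi_and_gradphi_general {M : Type*} (n : ℕ) (hn : 3 ≤ n)
    (D : (M → ℝ) → Fin n → M → ℝ)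
    (hadd : ∀ (f h : M → ℝ) i, D (f + h) i = D f i + D h i)
    (hleib : ∀ (f h : M → ℝ) i x,
      D (fun y => f y * h y) i x = f x * D h i x + h x * D f i x)
    (g ginv : M → Fin n → Fin n → ℝ)
    (hginv : ∀ x j k, ∑ m, ginv x j m * g x m k = if j = k then 1 else 0)
    (hginvsymm : ∀ x j k, ginv x j k = ginv x k j)
    (hDg : ∀ k l i, D (fun y => g y k l) i = 0)
    (u : M → Fin n → ℝ)
    (hunit : ∀ x, ∑ j, ∑ k, ginv x j k * u x j * u x k = -1)
    (φ : M → ℝ) (σ : M → Fin n → Fin n → ℝ)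
    (hσsymm : ∀ x j k, σ x j k = σ x k j)
    (hσtf : ∀ x, ∑ j, ∑ k, ginv x j k * σ x j k = 0)
    (hσu : ∀ x j, ∑ k, ∑ l, ginv x k l * u x l * σ x j k = 0)
    (Du : M → Fin n → Fin n → ℝ)
    (hDu : ∀ j k x, D (fun y => u y k) j x = Du x j k)
    (hdecomp : ∀ x j k, Du x j k = φ x * (u x j * u x k + g x j k) + σ x j k)
    (σσ : M → ℝ)
    -- divergence of the shear: ∇^l σ_{kl} = (σ_{rs}σ^{rs}) u_k
    (hdivσ : ∀ x k, ∑ l, ∑ m, ginv x l m * D (fun y => σ y m k) l x = σσ x * u x k)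
    (ξ : M → ℝ)
    -- Ricci identity R_{jk} u^j = ∇²u_k - ∇_k ∇^j u_j with R_{jk} u^j = ξ u_k:
    (hRicId : ∀ x k, ξ x * u x k =
      (∑ l, ∑ m, ginv x l m * D (fun y => Du y m k) l x)
      - D (fun y => ∑ j, ∑ i, ginv y j i * Du y j i) k x)
    (φdot : M → ℝ)
    (hφdot : ∀ x, φdot x = ∑ j, ∑ i, ginv x j i * u x i * D φ j x) :
    (∀ x, ξ x = ((n : ℝ) - 1) * ((φ x) ^ 2 + φdot x) + σσ x) ∧
    (∀ x k, D φ k x = -(φdot x) * u x k) := by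
  have hn2 : (n : ℝ) - 2 ≠ 0 := by
    have : (3 : ℝ) ≤ n := by exact_mod_cast hn
    linarith
  have htr : ∀ y, ∑ j, ∑ i, ginv y j i * Du y j i = ((n : ℝ) - 1) * φ y := fun y => by
    simpa using trace_kinematic (hginv y) (hginvsymm y) (hunit y) (hdecomp y) (hσtf y)
  have hlap : ∀ x k, ∑ l, ∑ m, ginv x l m * D (fun y => Du y m k) l x =
      u x k * (φdot x + ((n : ℝ) - 1) * φ x ^ 2 + σσ x) + D φ k x := fun x k => by
    rw [sum_inv_mul_deriv_kinematic D hadd hleib hDg hDu hdecomp hginv,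
      contract_kinematic_eq_zero (hginv x) (hginvsymm x) (hunit x) (hdecomp x) (hσsymm x) (hσu x),
      htr, ← hφdot, hdivσ]
    ring
  have hgraddiv : ∀ x k, D (fun y => ∑ j, ∑ i, ginv y j i * Du y j i) k x =
      ((n : ℝ) - 1) * D φ k x := fun x k => by
    simp_rw [htr]
    exact_mod_cast deriv_intCast_mul D hadd (n - 1) φ k x
  have key : ∀ x k, ((n : ℝ) - 2) * D φ k x =
      (φdot x + ((n : ℝ) - 1) * φ x ^ 2 + σσ x - ξ x) * u x k := fun x k => by
    linear_combination hRicId x k + hlap x k - hgraddiv x k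
  refine ⟨fun x => ?_, fun x k => ?_⟩
  · obtain ⟨hξ, -⟩ := eq_neg_sum_sum_inv_mul_of_mul_eq_mul (hunit x) hn2 (key x)
    rw [← hφdot] at hξ
    linear_combination -hξ
  · obtain ⟨-, hgrad⟩ := eq_neg_sum_sum_inv_mul_of_mul_eq_mul (hunit x) hn2 (key x)
    rw [hgrad, ← hφdot]

open Finset in
/-- Abstract-index formulation with an abstract covariant derivative `D`
(additive, Leibniz, metric-compatible).  Let `u` be unit timelike, geodesic and
irrotational with kinematical decomposition
`∇_j u_k = φ(u_j u_k + g_{jk}) + σ_{jk}` and `Ric(u) = ξ u`.  Using the Ricci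
identity `R_{jk} u^j = ∇²u_k - ∇_k ∇^j u_j` and assuming
`∇^l σ_{kl} = (σ_{rs} σ^{rs}) u_k`, one obtains
`ξ = (n-1)(φ² + φ̇) + σ_{kl}σ^{kl}` and `∇_k φ = -φ̇ u_k`. -/
theorem xi_and_gradphi {M : Type*} (n : ℕ) (hn : 3 ≤ n)
    (D : (M → ℝ) → Fin n → M → ℝ)
    (hadd : ∀ (f h : M → ℝ) i, D (f + h) i = D f i + D h i)
    (hleib : ∀ (f h : M → ℝ) i x,
      D (fun y => f y * h y) i x = f x * D h i x + h x * D f i x)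
    (g ginv : M → Fin n → Fin n → ℝ)
    (hginv : ∀ x j k, ∑ m, ginv x j m * g x m k = if j = k then 1 else 0)
    (hgsymm : ∀ x j k, g x j k = g x k j)
    (hginvsymm : ∀ x j k, ginv x j k = ginv x k j)
    (hDg : ∀ k l i, D (fun y => g y k l) i = 0)
    (hDginv : ∀ k l i, D (fun y => ginv y k l) i = 0)
    (u : M → Fin n → ℝ)
    (hunit : ∀ x, ∑ j, ∑ k, ginv x j k * u x j * u x k = -1)
    (φ : M → ℝ) (σ : M → Fin n → Fin n → ℝ)
    (hσsymm : ∀ x j k, σ x j k = σ x k j)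
    (hσtf : ∀ x, ∑ j, ∑ k, ginv x j k * σ x j k = 0)
    (hσu : ∀ x j, ∑ k, ∑ l, ginv x k l * u x l * σ x j k = 0)
    (Du : M → Fin n → Fin n → ℝ)
    (hDu : ∀ j k x, D (fun y => u y k) j x = Du x j k)
    (hdecomp : ∀ x j k, Du x j k = φ x * (u x j * u x k + g x j k) + σ x j k)
    (σσ : M → ℝ)
    (hσσ : ∀ x, σσ x = ∑ k, ∑ l, ∑ r, ∑ s,
      ginv x k r * ginv x l s * σ x k l * σ x r s)
    -- divergence of the shear: ∇^l σ_{kl} = (σ_{rs}σ^{rs}) u_k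
    (hdivσ : ∀ x k, ∑ l, ∑ m, ginv x l m * D (fun y => σ y m k) l x = σσ x * u x k)
    (ξ : M → ℝ)
    -- Ricci identity R_{jk} u^j = ∇²u_k - ∇_k ∇^j u_j with R_{jk} u^j = ξ u_k:
    (hRicId : ∀ x k, ξ x * u x k =
      (∑ l, ∑ m, ginv x l m * D (fun y => Du y m k) l x)
      - D (fun y => ∑ j, ∑ i, ginv y j i * Du y j i) k x)
    (φdot : M → ℝ)
    (hφdot : ∀ x, φdot x = ∑ j, ∑ i, ginv x j i * u x i * D φ j x) :
    (∀ x, ξ x = ((n : ℝ) - 1) * ((φ x) ^ 2 + φdot x) + σσ x) ∧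
    (∀ x k, D φ k x = -(φdot x) * u x k) :=
  xi_and_gradphi_general n hn D hadd hleib g ginv hginv hginvsymm hDg u hunit φ σ hσsymm hσtf hσu Du
    hDu hdecomp σσ hdivσ ξ hRicId φdot hφdot
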